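/- arXiv:2407.17016 — 2 statements merged into one kernel-verified Lean document; each statement's English description precedes it below -/
import Mathlib

section
/- Duality of the normalized q-Racah polynomials: for all integers n, x with 0 ≤ n ≤ N and 0 ≤ x ≤ N, one has Ω(x;c₃,c₂,c₁;N)·p_n(x;c₁,c₂,c₃;N) = Ω(n;c₁,c₂,c₃;N)·p_x(n;c₃,c₂,c₁;N). -/
noncomputable section
namespace qR

/-- q-Pochhammer symbol `(a;q)_k = ∏_{l<k} (1 - a qˡ)`. -/
def poch (q a : ℂ) (k : ℕ) : ℂ := ∏ l ∈ Finset.range k, (1 - a * q ^ l)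

/-- q-binomial coefficient, zero outside `0 ≤ n ≤ N`. -/
def binom (q : ℂ) (N n : ℤ) : ℂ :=
  if 0 ≤ n ∧ n ≤ N then poch q q N.toNat / (poch q q n.toNat * poch q q (N - n).toNat) else 0

/-- Normalisation `Ω(n;c1,c2,c3;N)`; `s` and `t2` are the chosen square roots of `q` and `c2`,
so that `(q c2)^(n - N/2) = (s t2)^(2n - N)`. -/
def Om (q s c1 c2 c3 t2 : ℂ) (N n : ℤ) : ℂ :=
  binom q N n * (1 - c2 * c3 * q ^ (2 * n + 1)) * poch q (q * c2) n.toNat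
      * poch q (c1 * c2 * c3 * q ^ (N + 2)) n.toNat * poch q (q * c1) (N - n).toNat
    / ((s * t2) ^ (2 * n - N) * poch q (c2 * c3 * q ^ (n + 1)) (N + 1).toNat
        * poch q (q * c3) n.toNat)

/-- Normalised q-Racah polynomial `p_n(x;c1,c2,c3;N)`, with the convention that it
vanishes unless `0 ≤ n ≤ N` and `0 ≤ x ≤ N`. -/
def p (q s c1 c2 c3 t2 : ℂ) (N n x : ℤ) : ℂ :=
  if 0 ≤ n ∧ n ≤ N ∧ 0 ≤ x ∧ x ≤ N then
    Om q s c1 c2 c3 t2 N n *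
      ∑ k ∈ Finset.range (n.toNat + 1),
        poch q (q ^ (-n)) k * poch q (c2 * c3 * q ^ (n + 1)) k * poch q (q ^ (-x)) k
            * poch q (c1 * c2 * q ^ (x + 1)) k * q ^ k
          / (poch q (q * c2) k * poch q (c1 * c2 * c3 * q ^ (N + 2)) k
              * poch q (q ^ (-N)) k * poch q q k)
  else 0

/-- `ω_n(c) = (-1)^n c^{n/2} q^{n(n+1)/2}`, where `r` is the chosen square root of `c`. -/
def om (q r : ℂ) (n : ℤ) : ℂ := (-1 : ℂ) ^ n * r ^ n * q ^ (n * (n + 1) / 2)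

/-- `ξ_n(c1,c2) = ((qc1;q)_n/(qc2;q)_n) (c2/c1)^{n/2}`, where `t1, t2` are the chosen
square roots of `c1, c2`. -/
def xi (q c1 c2 t1 t2 : ℂ) (n : ℤ) : ℂ :=
  poch q (q * c1) n.toNat / poch q (q * c2) n.toNat * (t2 / t1) ^ n

/-- `λ(x;c) = -(1-q^{-x})(1-c q^{x+1})`. -/
def lam (q c : ℂ) (x : ℤ) : ℂ := -(1 - q ^ (-x)) * (1 - c * q ^ (x + 1))

def PhiP (q c1 c2 c3 : ℂ) (N n : ℤ) : ℂ :=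
  -c2 * q ^ (n - N) * (1 - q ^ n) * (1 - c1 * q ^ (N - n + 1)) * (1 - c2 * c3 * q ^ (n + N + 1))
      * (1 - c3 * q ^ n)
    / ((1 - c2 * c3 * q ^ (2 * n)) * (1 - c2 * c3 * q ^ (2 * n + 1)))

def PhiM (q c1 c2 c3 : ℂ) (N n : ℤ) : ℂ :=
  (1 - q ^ (n - N)) * (1 - c1 * c2 * c3 * q ^ (n + N + 2)) * (1 - c2 * q ^ (n + 1))
      * (1 - c2 * c3 * q ^ (n + 1))
    / ((1 - c2 * c3 * q ^ (2 * n + 1)) * (1 - c2 * c3 * q ^ (2 * n + 2)))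

/-- `Φ^ε(n;c1,c2,c3;N)`, where `ε = 1, -1, 0` selects `Φ⁺, Φ⁻, Φ⁰`. -/
def Phi (q c1 c2 c3 : ℂ) (N ε n : ℤ) : ℂ :=
  if ε = 1 then PhiP q c1 c2 c3 N n
  else if ε = -1 then PhiM q c1 c2 c3 N n
  else -PhiP q c1 c2 c3 N n - PhiM q c1 c2 c3 N n

/-- `λ₊(x;c1,c2,c3;N)`. -/
def lamP (q c1 c2 c3 : ℂ) (N x : ℤ) : ℂ :=
  -(q ^ (-N - 1) / c3 - q ^ (-x)) * (1 - c1 * c2 * c3 * q ^ (N + x + 2))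

/-- `λ₋(x;c1,c2,c3;N)`. -/
def lamM (q c1 c2 c3 : ℂ) (N x : ℤ) : ℂ :=
  -(q ^ (-N) - q ^ (-x)) * (1 - c1 * c2 * q ^ (N + x + 1))

def PhiPp (q sq c1 c2 c3 : ℂ) (N n : ℤ) : ℂ :=
  -sq * c2 * q ^ (2 * n - N - 1) * (1 - q ^ n) * (1 - c1 * q ^ (N - n + 1))
      * (1 - c1 * q ^ (N + 2 - n)) * (1 - c3 * q ^ n)
    / ((1 - c2 * c3 * q ^ (2 * n)) * (1 - c2 * c3 * q ^ (2 * n + 1)))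

def PhiPm (q sq c1 c2 c3 : ℂ) (N n : ℤ) : ℂ :=
  -((1 - c1 * c2 * c3 * q ^ (n + N + 2)) * (1 - c1 * c2 * c3 * q ^ (n + N + 3))
      * (1 - c2 * q ^ (n + 1)) * (1 - c2 * c3 * q ^ (n + 1)))
    / (c3 * q ^ (N + 1) * sq * (1 - c2 * c3 * q ^ (2 * n + 1)) * (1 - c2 * c3 * q ^ (2 * n + 2)))

def PhiP0 (q sq c1 c2 c3 : ℂ) (N n : ℤ) : ℂ :=
  -PhiPp q sq c1 c2 c3 N n - PhiPm q sq c1 c2 c3 N n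
    - (1 - c1 * c2 * q ^ (N + 2)) * (1 - c1 * c2 * c3 * q ^ (N + 2)) / (c3 * q ^ (N + 1) * sq)

def PhiMp (q sq c1 c2 c3 : ℂ) (N n : ℤ) : ℂ :=
  -sq * (1 - q ^ n) * (1 - c3 * q ^ n) * (1 - c2 * c3 * q ^ (n + N))
      * (1 - c2 * c3 * q ^ (n + N + 1))
    / (q ^ N * (1 - c2 * c3 * q ^ (2 * n)) * (1 - c2 * c3 * q ^ (2 * n + 1)))

def PhiMm (q sq c1 c2 c3 : ℂ) (N n : ℤ) : ℂ :=
  -c3 * sq * q ^ N * (1 - q ^ (n - N)) * (1 - q ^ (n - N + 1)) * (1 - c2 * q ^ (n + 1))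
      * (1 - c2 * c3 * q ^ (n + 1))
    / ((1 - c2 * c3 * q ^ (2 * n + 1)) * (1 - c2 * c3 * q ^ (2 * n + 2)))

def PhiM0 (q sq c1 c2 c3 : ℂ) (N n : ℤ) : ℂ :=
  -PhiMp q sq c1 c2 c3 N n - PhiMm q sq c1 c2 c3 N n - sq * (1 - c3 * q ^ N) * (q ^ (-N) - 1)

/-- Contiguity coefficient `Φ_σ^ε(n;c1,c2,c3;N)`, where `σ = 1` is the `+` and `σ = -1`
the `-` family, `ε ∈ {1,0,-1}` selects the superscript, and `sq` is the chosen square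
root of `q c2`. -/
def PhiC (q sq c1 c2 c3 : ℂ) (σ ε N n : ℤ) : ℂ :=
  if σ = 1 then
    if ε = 1 then PhiPp q sq c1 c2 c3 N n
    else if ε = -1 then PhiPm q sq c1 c2 c3 N n
    else PhiP0 q sq c1 c2 c3 N n
  else
    if ε = 1 then PhiMp q sq c1 c2 c3 N n
    else if ε = -1 then PhiMm q sq c1 c2 c3 N n
    else PhiM0 q sq c1 c2 c3 N n

def Fp (q c1 c2 : ℂ) (x : ℤ) : ℂ :=
  c1 * c2 ^ 2 * q ^ (x + 1) * (1 - c1 * q ^ x) * (1 - q ^ x)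
    / ((1 - c1 * c2 * q ^ (2 * x)) * (1 - c1 * c2 * q ^ (2 * x + 1)))

def Fm (q c1 c2 : ℂ) (x : ℤ) : ℂ :=
  c1 * c2 * q ^ (x + 1) * (1 - c2 * q ^ (x + 1)) * (1 - c1 * c2 * q ^ (x + 1))
    / ((1 - c1 * c2 * q ^ (2 * x + 1)) * (1 - c1 * c2 * q ^ (2 * x + 2)))

/-- The coefficients `A^{ε,ε'}_{i,j}(c1,c2,c3,c4;N)` for `(ε,ε') ≠ (0,0)`;
`t2` is the chosen square root of `c2` and the fifth parameter
`c0 = (q^{2N+3} c1 c2 c3 c4)⁻¹` is computed internally. -/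
def Aaux (q s c1 c2 c3 c4 t2 : ℂ) (N ε ε' i j : ℤ) : ℂ :=
  if ε' = 1 ∨ ε' = -1 then
    -c3 * q ^ (N + 1) *
        (if ε' = 1 then Fp q c4 ((q ^ (2 * N + 3) * c1 * c2 * c3 * c4)⁻¹) j
         else Fm q c4 ((q ^ (2 * N + 3) * c1 * c2 * c3 * c4)⁻¹) j) *
        PhiC q (s * t2) c1 c2 c3 ε' ε (N - j) i
  else if ε = 1 ∨ ε = -1 then
    c3 * q ^ (N + 1) *
        (Fp q c4 ((q ^ (2 * N + 3) * c1 * c2 * c3 * c4)⁻¹) j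
          + Fm q c4 ((q ^ (2 * N + 3) * c1 * c2 * c3 * c4)⁻¹) j) *
        Phi q c1 c2 c3 (N - j) ε i
  else 0

/-- The coefficients `A^{ε,ε'}_{i,j}(c1,c2,c3,c4;N)`. -/
def A (q s c1 c2 c3 c4 t2 : ℂ) (N ε ε' i j : ℤ) : ℂ :=
  if ε = 0 ∧ ε' = 0 then
    -((1 - c3 * q ^ (N + 1 - j)) * (s * t2) / (1 - c1 * c2 * q ^ (N + 2 - j)))
          * ∑ e ∈ ({-1, 0, 1} : Finset ℤ), Aaux q s c1 c2 c3 c4 t2 N e 1 i j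
      - (1 - c1 * c2 * q ^ (N + 1 - j)) / ((1 - c3 * q ^ (N - j)) * (s * t2))
          * ∑ e ∈ ({-1, 0, 1} : Finset ℤ), Aaux q s c1 c2 c3 c4 t2 N e (-1) i j
      - ∑ e ∈ ({-1, 1} : Finset ℤ), Aaux q s c1 c2 c3 c4 t2 N e 0 i j
  else Aaux q s c1 c2 c3 c4 t2 N ε ε' i j

/-- `Λ(x;c1,c2,c3,c4;N)`; `s, t1, t2, t3, t4` are the chosen square roots of
`q, c1, c2, c3, c4`. -/
def Lam (q s c1 c2 c3 c4 t1 t2 t3 t4 : ℂ) (N x : ℤ) : ℂ :=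
  (-1 : ℂ) ^ x * binom q N x * (1 - c1 * c2 * q ^ (2 * x + 1)) * poch q (q * c2) x.toNat
      * (s * t2) ^ N * (t1 * t3 / (t2 * t4)) ^ x * q ^ (x * (x - 1) / 2)
    / (poch q (q * c1) x.toNat * poch q (q ^ (x + 1) * c1 * c2) (N + 1).toNat)

/-- Tratnik polynomial of q-Racah type `T_{i,j}(x,y;c1,c2,c3,c4;N)`; the fifth parameter
`c0 = (q^{2N+3} c1 c2 c3 c4)⁻¹` and its square root `t0 = (s^{2N+3} t1 t2 t3 t4)⁻¹`
are computed internally. -/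
def T (q s c1 c2 c3 c4 t1 t2 t3 t4 : ℂ) (N i j x y : ℤ) : ℂ :=
  if 0 ≤ i ∧ 0 ≤ j ∧ i + j ≤ N then
    p q s c1 c2 c3 t2 (N - j) i x *
      p q s c3 ((q ^ (2 * N + 3) * c1 * c2 * c3 * c4)⁻¹) c4
        ((s ^ (2 * N + 3) * t1 * t2 * t3 * t4)⁻¹) (N - x) j y
  else 0

/-- Griffiths polynomial of q-Racah type `G_{i,j}(x,y;c1,c2,c3,c4;N)`; the fifth parameter
`c0 = (q^{2N+3} c1 c2 c3 c4)⁻¹` and its square root `t0 = (s^{2N+3} t1 t2 t3 t4)⁻¹`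
are computed internally. -/
def G (q s c1 c2 c3 c4 t1 t2 t3 t4 : ℂ) (N i j x y : ℤ) : ℂ :=
  if 0 ≤ i ∧ 0 ≤ j ∧ i + j ≤ N then
    ∑ a ∈ Finset.range ((min (N - j) (N - y)).toNat + 1),
      om q (t1 * t2 * t3 / t4) (a : ℤ) * p q s c1 c2 c3 t2 (N - j) i (a : ℤ) *
        p q s c3 ((q ^ (2 * N + 3) * c1 * c2 * c3 * c4)⁻¹) c4
          ((s ^ (2 * N + 3) * t1 * t2 * t3 * t4)⁻¹) (N - (a : ℤ)) j y *
        p q s c4 c2 c1 t2 (N - y) (a : ℤ) x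
  else 0

end qR

/-- Duality of the normalized q-Racah polynomials. -/
theorem qRacah_duality
    (N : ℕ) (q s c1 c2 c3 t1 t2 t3 : ℂ)
    (hq : q ≠ 0) (hc1 : c1 ≠ 0) (hc2 : c2 ≠ 0) (hc3 : c3 ≠ 0)
    (hs : s ^ 2 = q) (ht1 : t1 ^ 2 = c1) (ht2 : t2 ^ 2 = c2) (ht3 : t3 ^ 2 = c3)
    (hgen : ∀ e1 e2 e3 : ℕ, e1 ≤ 1 → e2 ≤ 1 → e3 ≤ 1 → 1 ≤ e1 + e2 + e3 →
      ∀ k : ℤ, 1 ≤ k → k ≤ 2 * (N : ℤ) + 5 → c1 ^ e1 * c2 ^ e2 * c3 ^ e3 ≠ q ^ (-k))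
    (hq1 : ∀ k : ℕ, 1 ≤ k → k ≤ N → q ^ k ≠ 1)
    (n x : ℤ) (hn0 : 0 ≤ n) (hnN : n ≤ (N : ℤ)) (hx0 : 0 ≤ x) (hxN : x ≤ (N : ℤ)) :
    qR.Om q s c3 c2 c1 t2 (N : ℤ) x * qR.p q s c1 c2 c3 t2 (N : ℤ) n x
      = qR.Om q s c1 c2 c3 t2 (N : ℤ) n * qR.p q s c3 c2 c1 t2 (N : ℤ) x n := by

  have key : ∀ (m : ℤ), 0 ≤ m → ∀ k : ℕ, m.toNat < k → qR.poch q (q ^ (-m)) k = 0 := by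
    intro m hm k hk
    apply Finset.prod_eq_zero (Finset.mem_range.mpr hk)
    have h : q ^ (-m) * q ^ m.toNat = 1 := by
      rw [← zpow_natCast q m.toNat, Int.toNat_of_nonneg hm, ← zpow_add₀ hq]
      simp
    rw [h]; ring
  simp only [qR.p]
  rw [if_pos ⟨hn0, hnN, hx0, hxN⟩, if_pos ⟨hx0, hxN, hn0, hnN⟩]
  set M := max n.toNat x.toNat with hM
  set f : ℕ → ℂ := fun k =>
    qR.poch q (q ^ (-n)) k * qR.poch q (c2 * c3 * q ^ (n + 1)) k * qR.poch q (q ^ (-x)) k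
        * qR.poch q (c1 * c2 * q ^ (x + 1)) k * q ^ k
      / (qR.poch q (q * c2) k * qR.poch q (c1 * c2 * c3 * q ^ ((N : ℤ) + 2)) k
          * qR.poch q (q ^ (-(N : ℤ))) k * qR.poch q q k) with hf
  set g : ℕ → ℂ := fun k =>
    qR.poch q (q ^ (-x)) k * qR.poch q (c2 * c1 * q ^ (x + 1)) k * qR.poch q (q ^ (-n)) k
        * qR.poch q (c3 * c2 * q ^ (n + 1)) k * q ^ k
      / (qR.poch q (q * c2) k * qR.poch q (c3 * c2 * c1 * q ^ ((N : ℤ) + 2)) k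
          * qR.poch q (q ^ (-(N : ℤ))) k * qR.poch q q k) with hg
  have h1 : (∑ k ∈ Finset.range (n.toNat + 1), f k) = ∑ k ∈ Finset.range (M + 1), f k := by
    apply Finset.sum_subset (Finset.range_subset_range.mpr (by omega))
    intro k _ hk
    have hk' : n.toNat < k := by
      by_contra h; exact hk (Finset.mem_range.mpr (by omega))
    rw [hf]; simp only; rw [key n hn0 k hk']; simp
  have h2 : (∑ k ∈ Finset.range (x.toNat + 1), g k) = ∑ k ∈ Finset.range (M + 1), g k := by
    apply Finset.sum_subset (Finset.range_subset_range.mpr (by omega))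
    intro k _ hk
    have hk' : x.toNat < k := by
      by_contra h; exact hk (Finset.mem_range.mpr (by omega))
    rw [hg]; simp only; rw [key x hx0 k hk']; simp
  have h3 : (∑ k ∈ Finset.range (M + 1), f k) = ∑ k ∈ Finset.range (M + 1), g k := by
    refine Finset.sum_congr rfl fun k _ => ?_
    rw [hf, hg]; simp only
    rw [show c3 * c2 * c1 = c1 * c2 * c3 by ring, show c2 * c1 = c1 * c2 by ring,
      show c3 * c2 = c2 * c3 by ring]
    ring
  rw [h1, h3, ← h2]
  ring
end
end

section
/- Duality of the Tratnik polynomials of q-Racah type: for all nonnegative integers i, j, x, y with i+j ≤ N and x+y ≤ N, one has T_{i,j}(x,y;c₁,c₂,c₃,c₄;N) / (Ω(i;c₁,c₂,c₃;N−j)·Λ(j;c₄,c₀,c₃,c₁;N)) = T_{y,x}(j,i;c₄,c₀,c₃,c₁;N) / (Ω(y;c₄,c₀,c₃;N−x)·Λ(x;c₁,c₂,c₃,c₄;N)). (For the parameter list (c₄,c₀,c₃,c₁) the induced fifth parameter (q^{2N+3}c₄c₀c₃c₁)^{−1} equals c₂.) -/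
noncomputable section
namespace qR

/-! ### Auxiliary lemmas for the duality theorem -/

lemma poch_zero' (q a : ℂ) : poch q a 0 = 1 := Finset.prod_range_zero _

lemma poch_succ (q a : ℂ) (k : ℕ) : poch q a (k + 1) = poch q a k * (1 - a * q ^ k) :=
  Finset.prod_range_succ _ _

lemma poch_succ' (q a : ℂ) (k : ℕ) : poch q a (k + 1) = (1 - a) * poch q (a * q) k := by
  unfold poch
  rw [Finset.prod_range_succ']
  simp only [pow_zero, mul_one, pow_succ]
  rw [mul_comm]
  congr 1
  refine Finset.prod_congr rfl fun l _ => ?_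
  ring_nf

lemma poch_add (q a : ℂ) (m n : ℕ) :
    poch q a (m + n) = poch q a m * poch q (a * q ^ m) n := by
  unfold poch
  rw [Finset.prod_range_add]
  congr 1
  refine Finset.prod_congr rfl fun l _ => ?_
  rw [pow_add]; ring

lemma poch_ne_zero {q a : ℂ} (n : ℕ) (h : ∀ l, l < n → a * q ^ l ≠ 1) : poch q a n ≠ 0 := by
  refine Finset.prod_ne_zero_iff.mpr fun l hl => ?_
  rw [sub_ne_zero]
  exact fun hx => h l (Finset.mem_range.mp hl) (by rw [← hx])

lemma poch_qneg_eq_zero {q : ℂ} (hq : q ≠ 0) (n k : ℕ) (h : n < k) :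
    poch q (q ^ (-(n : ℤ))) k = 0 := by
  refine Finset.prod_eq_zero (Finset.mem_range.mpr h) ?_
  have : q ^ (-(n : ℤ)) * q ^ n = 1 := by
    rw [← zpow_natCast q n, ← zpow_add₀ hq]
    simp
  rw [this, sub_self]

lemma qhalf {q s : ℂ} (hs : s ^ 2 = q) (m : ℤ) :
    q ^ (m * (m - 1) / 2) = s ^ (m * (m - 1)) := by
  have he : (2 : ℤ) ∣ m * (m - 1) := by
    rcases Int.even_or_odd m with h | h
    · exact Dvd.dvd.mul_right h.two_dvd _
    · exact Dvd.dvd.mul_left (Int.even_sub_one.mpr (Int.not_even_iff_odd.mpr h)).two_dvd _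
  have h2 : s ^ (2 : ℤ) = q := by rw [← hs]; norm_cast
  calc q ^ (m * (m - 1) / 2) = (s ^ (2 : ℤ)) ^ (m * (m - 1) / 2) := by rw [h2]
    _ = s ^ (2 * (m * (m - 1) / 2)) := by rw [← zpow_mul]
    _ = s ^ (m * (m - 1)) := by rw [Int.mul_ediv_cancel' he]

lemma poch_reflect {q w : ℂ} (hq : q ≠ 0) (hw : w ≠ 0) (m : ℤ) (n : ℕ) :
    poch q (q ^ m * w⁻¹) n
      = (-1 : ℂ) ^ (n : ℤ) * w ^ (-(n : ℤ)) * (q ^ m) ^ (n : ℤ)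
          * q ^ ((n : ℤ) * ((n : ℤ) - 1) / 2) * poch q (w * q ^ (1 - m - (n : ℤ))) n := by
  induction n with
  | zero => simp [poch_zero']
  | succ n ih =>
      push_cast
      rw [poch_succ, ih]
      have h1 : poch q (w * q ^ (1 - m - ((n : ℤ) + 1))) (n + 1)
          = (1 - w * q ^ (-m - (n : ℤ))) * poch q (w * q ^ (1 - m - (n : ℤ))) n := by
        rw [poch_succ']
        congr 2
        · congr 1; congr 1; ring
        · rw [mul_assoc, ← zpow_add_one₀ hq]
          congr 1; ring
      rw [h1]
      have key : (1 : ℂ) - q ^ m * w⁻¹ * q ^ n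
          = -1 * w⁻¹ * (q ^ m * q ^ (n : ℤ)) * (1 - w * q ^ (-m - (n : ℤ))) := by
        have hX1 : (q ^ m * q ^ (n : ℤ)) * q ^ (-m - (n : ℤ)) = 1 := by
          rw [mul_assoc, ← zpow_add₀ hq, ← zpow_add₀ hq]; norm_num
        rw [← zpow_natCast q n]
        linear_combination (-(w * w⁻¹)) * hX1 - mul_inv_cancel₀ hw
      rw [key]
      have e2 : (-1 : ℂ) ^ ((n : ℤ) + 1) = (-1 : ℂ) ^ (n : ℤ) * (-1) := by
        rw [zpow_add_one₀ (by norm_num : (-1 : ℂ) ≠ 0)]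
      have e3 : w ^ (-((n : ℤ) + 1)) = w ^ (-(n : ℤ)) * w⁻¹ := by
        rw [show -((n : ℤ) + 1) = -(n : ℤ) + (-1) by ring, zpow_add₀ hw, zpow_neg_one]
      have e4 : (q ^ m) ^ ((n : ℤ) + 1) = (q ^ m) ^ (n : ℤ) * q ^ m := by
        rw [zpow_add_one₀ (zpow_ne_zero _ hq)]
      have e5 : q ^ (((n : ℤ) + 1) * ((n : ℤ) + 1 - 1) / 2)
          = q ^ ((n : ℤ) * ((n : ℤ) - 1) / 2) * q ^ (n : ℤ) := by
        rw [show ((n : ℤ) + 1) * ((n : ℤ) + 1 - 1) / 2 = ((n : ℤ) * ((n : ℤ) - 1) + (n : ℤ) * 2) / 2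
              by ring_nf,
            Int.add_mul_ediv_right _ _ (by norm_num : (2 : ℤ) ≠ 0), zpow_add₀ hq]
      rw [e2, e3, e4, e5]
      ring

lemma sum_sym (q a b c : ℂ) (hq : q ≠ 0) (M : ℤ) (n x : ℕ)
    (hn : (n : ℤ) ≤ M) (hx : (x : ℤ) ≤ M) :
    ∑ k ∈ Finset.range (n + 1),
        poch q (q ^ (-(n : ℤ))) k * poch q (b * c * q ^ ((n : ℤ) + 1)) k
            * poch q (q ^ (-(x : ℤ))) k * poch q (a * b * q ^ ((x : ℤ) + 1)) k * q ^ k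
          / (poch q (q * b) k * poch q (a * b * c * q ^ (M + 2)) k
              * poch q (q ^ (-M)) k * poch q q k)
      = ∑ k ∈ Finset.range (x + 1),
          poch q (q ^ (-(x : ℤ))) k * poch q (b * a * q ^ ((x : ℤ) + 1)) k
              * poch q (q ^ (-(n : ℤ))) k * poch q (c * b * q ^ ((n : ℤ) + 1)) k * q ^ k
            / (poch q (q * b) k * poch q (c * b * a * q ^ (M + 2)) k
                * poch q (q ^ (-M)) k * poch q q k) := by
  have hnM : n ≤ M.toNat := by omega
  have hxM : x ≤ M.toNat := by omega
  have ext1 : ∀ (m : ℕ) (f : ℕ → ℂ), m ≤ M.toNat →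
      (∀ k, m < k → f k = 0) →
      ∑ k ∈ Finset.range (m + 1), f k = ∑ k ∈ Finset.range (M.toNat + 1), f k := by
    intro m f hm hf
    refine Finset.sum_subset (Finset.range_subset_range.mpr (by omega)) fun k _ hk => ?_
    exact hf k (by simpa using Nat.lt_of_succ_le (Nat.not_lt.mp (by simpa using hk)))
  rw [ext1 n _ hnM (fun k hk => by rw [poch_qneg_eq_zero hq n k hk]; simp),
      ext1 x _ hxM (fun k hk => by rw [poch_qneg_eq_zero hq x k hk]; simp)]
  refine Finset.sum_congr rfl fun k _ => ?_
  rw [show b * a * q ^ ((x : ℤ) + 1) = a * b * q ^ ((x : ℤ) + 1) by ring,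
      show c * b * q ^ ((n : ℤ) + 1) = b * c * q ^ ((n : ℤ) + 1) by ring,
      show c * b * a * q ^ (M + 2) = a * b * c * q ^ (M + 2) by ring]
  ring

/-! ### Monomial bookkeeping -/

def Pw (s t1 t2 t3 t4 : ℂ) (a b c d e f : ℤ) : ℂ :=
  (-1) ^ a * s ^ b * t1 ^ c * t2 ^ d * t3 ^ e * t4 ^ f

variable {s t1 t2 t3 t4 : ℂ}

lemma Pw_mul (hs0 : s ≠ 0) (h10 : t1 ≠ 0) (h20 : t2 ≠ 0) (h30 : t3 ≠ 0) (h40 : t4 ≠ 0)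
    (a b c d e f a' b' c' d' e' f' : ℤ) :
    Pw s t1 t2 t3 t4 a b c d e f * Pw s t1 t2 t3 t4 a' b' c' d' e' f'
      = Pw s t1 t2 t3 t4 (a + a') (b + b') (c + c') (d + d') (e + e') (f + f') := by
  unfold Pw
  rw [zpow_add₀ (by norm_num : (-1 : ℂ) ≠ 0), zpow_add₀ hs0, zpow_add₀ h10, zpow_add₀ h20,
    zpow_add₀ h30, zpow_add₀ h40]
  ring

lemma Pw_neg1 (a : ℤ) : (-1 : ℂ) ^ a = Pw s t1 t2 t3 t4 a 0 0 0 0 0 := by simp [Pw]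
lemma Pw_s (b : ℤ) : s ^ b = Pw s t1 t2 t3 t4 0 b 0 0 0 0 := by simp [Pw]
lemma Pw_t1 (c : ℤ) : t1 ^ c = Pw s t1 t2 t3 t4 0 0 c 0 0 0 := by simp [Pw]
lemma Pw_t2 (d : ℤ) : t2 ^ d = Pw s t1 t2 t3 t4 0 0 0 d 0 0 := by simp [Pw]
lemma Pw_t3 (e : ℤ) : t3 ^ e = Pw s t1 t2 t3 t4 0 0 0 0 e 0 := by simp [Pw]
lemma Pw_t4 (f : ℤ) : t4 ^ f = Pw s t1 t2 t3 t4 0 0 0 0 0 f := by simp [Pw]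

lemma Pw_congr (k : ℤ) {a b c d e f a' b' c' d' e' f' : ℤ} (ha : a = a' + 2 * k)
    (hb : b = b') (hc : c = c') (hd : d = d') (he : e = e') (hf : f = f') :
    Pw s t1 t2 t3 t4 a b c d e f = Pw s t1 t2 t3 t4 a' b' c' d' e' f' := by
  subst ha hb hc hd he hf
  unfold Pw
  rw [zpow_add₀ (by norm_num : (-1 : ℂ) ≠ 0), zpow_mul]
  norm_num

set_option maxHeartbeats 1000000 in
lemma mono {q s c1 c2 c3 t0 t1 t2 t3 t4 : ℂ}
    (hs0 : s ≠ 0) (h10 : t1 ≠ 0) (h20 : t2 ≠ 0) (h30 : t3 ≠ 0) (h40 : t4 ≠ 0)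
    (hs : s ^ 2 = q) (ht1 : t1 ^ 2 = c1) (ht2 : t2 ^ 2 = c2) (ht3 : t3 ^ 2 = c3)
    (N x j : ℤ)
    (ht0 : t0 = (s ^ (2 * N + 3) * t1 * t2 * t3 * t4)⁻¹) :
    (-1 : ℂ) ^ x * (s * t2) ^ N * (t1 * t3 / (t2 * t4)) ^ x * q ^ (x * (x - 1) / 2)
        * ((-1 : ℂ) ^ j * (c1 * c2) ^ (-j) * (q ^ (-N - x - 1)) ^ j * q ^ (j * (j - 1) / 2))
        * (s * t2) ^ (2 * x - (N - j))
        * ((-1 : ℂ) ^ x * (c1 * c2 * c3) ^ (-x) * (q ^ (j - x - N - 1)) ^ x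
            * q ^ (x * (x - 1) / 2))
      = (-1 : ℂ) ^ j * (s * t0) ^ N * (t4 * t3 / (t0 * t1)) ^ j * q ^ (j * (j - 1) / 2)
          * (s * t0) ^ (2 * j - (N - x)) := by
  simp only [qhalf hs]
  rw [← hs, ← ht1, ← ht2, ← ht3, ht0]
  simp only [div_eq_mul_inv, mul_inv, inv_inv, mul_zpow, inv_zpow, ← zpow_neg, ← zpow_natCast,
    ← zpow_mul]
  simp only [Pw_neg1 (s := s) (t1 := t1) (t2 := t2) (t3 := t3) (t4 := t4),
    Pw_s (s := s) (t1 := t1) (t2 := t2) (t3 := t3) (t4 := t4),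
    Pw_t1 (s := s) (t1 := t1) (t2 := t2) (t3 := t3) (t4 := t4),
    Pw_t2 (s := s) (t1 := t1) (t2 := t2) (t3 := t3) (t4 := t4),
    Pw_t3 (s := s) (t1 := t1) (t2 := t2) (t3 := t3) (t4 := t4),
    Pw_t4 (s := s) (t1 := t1) (t2 := t2) (t3 := t3) (t4 := t4),
    Pw_mul hs0 h10 h20 h30 h40]
  exact Pw_congr x (by ring) (by ring) (by ring) (by ring) (by ring) (by ring)

/-! ### Nonvanishing helpers -/

lemma ne_one_of_ne {q v : ℂ} (e : ℤ) (h : v ≠ q ^ (-e)) : v * q ^ e ≠ 1 :=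
  fun hE => h (by rw [zpow_neg]; exact eq_inv_of_mul_eq_one_left hE)

lemma one_sub_ne {q v : ℂ} (e : ℤ) (h : v ≠ q ^ (-e)) : 1 - v * q ^ e ≠ 0 :=
  sub_ne_zero.mpr (Ne.symm (ne_one_of_ne e h))

lemma poch_shift_ne_zero {q v : ℂ} (hq : q ≠ 0) (e : ℤ) (L : ℕ)
    (h : ∀ k : ℤ, e ≤ k → k < e + L → v * q ^ k ≠ 1) : poch q (v * q ^ e) L ≠ 0 := by
  apply poch_ne_zero
  intro l hl hE
  refine h (e + l) (by omega) (by omega) ?_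
  rw [zpow_add₀ hq, ← mul_assoc, zpow_natCast]
  exact hE

/-! ### Normal forms for `Om` and `Lam` -/

lemma Om_eq (q s a b c t : ℂ) (M n : ℕ) (hn : n ≤ M) :
    Om q s a b c t (M : ℤ) (n : ℤ)
      = poch q q M * (1 - b * c * q ^ (2 * (n : ℤ) + 1)) * poch q (q * b) n
          * poch q (a * b * c * q ^ ((M : ℤ) + 2)) n * poch q (q * a) (M - n)
        / (poch q q n * poch q q (M - n)
            * ((s * t) ^ (2 * (n : ℤ) - (M : ℤ)) * poch q (b * c * q ^ ((n : ℤ) + 1)) (M + 1)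
                * poch q (q * c) n)) := by
  unfold Om binom
  rw [if_pos ⟨by omega, by exact_mod_cast hn⟩,
      show ((M : ℤ)).toNat = M by omega, show ((n : ℤ)).toNat = n by omega,
      show ((M : ℤ) - (n : ℤ)).toNat = M - n by omega,
      show ((M : ℤ) + 1).toNat = M + 1 by omega]
  ring

lemma Lam_eq (q s a b c d ta tb tc td : ℂ) (N x : ℕ) (hx : x ≤ N) :
    Lam q s a b c d ta tb tc td (N : ℤ) (x : ℤ)
      = (-1 : ℂ) ^ (x : ℤ) * poch q q N * (1 - a * b * q ^ (2 * (x : ℤ) + 1)) * poch q (q * b) x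
          * (s * tb) ^ (N : ℤ) * (ta * tc / (tb * td)) ^ (x : ℤ)
          * q ^ ((x : ℤ) * ((x : ℤ) - 1) / 2)
        / (poch q q x * poch q q (N - x)
            * (poch q (q * a) x * poch q (q ^ ((x : ℤ) + 1) * a * b) (N + 1))) := by
  unfold Lam binom
  rw [if_pos ⟨by omega, by exact_mod_cast hx⟩,
      show ((N : ℤ)).toNat = N by omega, show ((x : ℤ)).toNat = x by omega,
      show ((N : ℤ) - (x : ℤ)).toNat = N - x by omega,
      show ((N : ℤ) + 1).toNat = N + 1 by omega]
  ring

set_option maxHeartbeats 2000000 in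
lemma scalar (N : ℕ) (q s c1 c2 c3 c4 c0 t1 t2 t3 t4 t0 : ℂ)
    (hq : q ≠ 0) (hc1 : c1 ≠ 0) (hc2 : c2 ≠ 0) (hc3 : c3 ≠ 0) (hc4 : c4 ≠ 0)
    (hs : s ^ 2 = q) (ht1 : t1 ^ 2 = c1) (ht2 : t2 ^ 2 = c2) (ht3 : t3 ^ 2 = c3)
    (ht4 : t4 ^ 2 = c4)
    (hc0 : c0 = (q ^ (2 * (N : ℤ) + 3) * c1 * c2 * c3 * c4)⁻¹)
    (ht0 : t0 = (s ^ (2 * (N : ℤ) + 3) * t1 * t2 * t3 * t4)⁻¹)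
    (hgen : ∀ e0 e1 e2 e3 e4 : ℕ, e0 ≤ 1 → e1 ≤ 1 → e2 ≤ 1 → e3 ≤ 1 → e4 ≤ 1 →
      1 ≤ e0 + e1 + e2 + e3 + e4 → e0 + e1 + e2 + e3 + e4 ≤ 4 →
      ∀ k : ℤ, 1 ≤ k → k ≤ 2 * (N : ℤ) + 5 →
        c0 ^ e0 * c1 ^ e1 * c2 ^ e2 * c3 ^ e3 * c4 ^ e4 ≠ q ^ (-k))
    (hq1 : ∀ k : ℕ, 1 ≤ k → k ≤ N → q ^ k ≠ 1)
    (x j : ℕ) (hxj : x + j ≤ N) :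
    Om q s c3 c0 c4 t0 ((N : ℤ) - (x : ℤ)) (j : ℤ) * Lam q s c1 c2 c3 c4 t1 t2 t3 t4 (N : ℤ) (x : ℤ)
      = Om q s c3 c2 c1 t2 ((N : ℤ) - (j : ℤ)) (x : ℤ)
          * Lam q s c4 c0 c3 c1 t4 t0 t3 t1 (N : ℤ) (j : ℤ) := by
  -- basic nonvanishing
  have hs0 : s ≠ 0 := fun h => hq (by rw [← hs, h]; ring)
  have h10 : t1 ≠ 0 := fun h => hc1 (by rw [← ht1, h]; ring)
  have h20 : t2 ≠ 0 := fun h => hc2 (by rw [← ht2, h]; ring)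
  have h30 : t3 ≠ 0 := fun h => hc3 (by rw [← ht3, h]; ring)
  have h40 : t4 ≠ 0 := fun h => hc4 (by rw [← ht4, h]; ring)
  have ht00 : t0 ≠ 0 := by
    rw [ht0]
    exact inv_ne_zero (by
      exact mul_ne_zero (mul_ne_zero (mul_ne_zero (mul_ne_zero (zpow_ne_zero _ hs0) h10) h20)
        h30) h40)
  -- hgen instances
  have g04 : ∀ k : ℤ, 1 ≤ k → k ≤ 2 * (N : ℤ) + 5 → c0 * c4 ≠ q ^ (-k) := fun k h1 h2 => by
    have := hgen 1 0 0 0 1 (by norm_num) (by norm_num) (by norm_num) (by norm_num) (by norm_num)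
      (by norm_num) (by norm_num) k h1 h2
    simpa using this
  have g12 : ∀ k : ℤ, 1 ≤ k → k ≤ 2 * (N : ℤ) + 5 → c1 * c2 ≠ q ^ (-k) := fun k h1 h2 => by
    have := hgen 0 1 1 0 0 (by norm_num) (by norm_num) (by norm_num) (by norm_num) (by norm_num)
      (by norm_num) (by norm_num) k h1 h2
    simpa using this
  have g123 : ∀ k : ℤ, 1 ≤ k → k ≤ 2 * (N : ℤ) + 5 → c1 * c2 * c3 ≠ q ^ (-k) := fun k h1 h2 => by
    have := hgen 0 1 1 1 0 (by norm_num) (by norm_num) (by norm_num) (by norm_num) (by norm_num)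
      (by norm_num) (by norm_num) k h1 h2
    simpa [mul_assoc] using this
  have g1 : ∀ k : ℤ, 1 ≤ k → k ≤ 2 * (N : ℤ) + 5 → c1 ≠ q ^ (-k) := fun k h1 h2 => by
    have := hgen 0 1 0 0 0 (by norm_num) (by norm_num) (by norm_num) (by norm_num) (by norm_num)
      (by norm_num) (by norm_num) k h1 h2
    simpa using this
  have g4 : ∀ k : ℤ, 1 ≤ k → k ≤ 2 * (N : ℤ) + 5 → c4 ≠ q ^ (-k) := fun k h1 h2 => by
    have := hgen 0 0 0 0 1 (by norm_num) (by norm_num) (by norm_num) (by norm_num) (by norm_num)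
      (by norm_num) (by norm_num) k h1 h2
    simpa using this
  -- poch q q facts
  have hP : ∀ m : ℕ, m ≤ N → poch q q m ≠ 0 := by
    intro m hm
    apply poch_ne_zero
    intro l hl hE
    exact hq1 (l + 1) (by omega) (by omega) (by rw [pow_succ, mul_comm]; exact hE)
  -- the individual denominator factors
  have hB : poch q (q * c4) j ≠ 0 := by
    rw [show q * c4 = c4 * q ^ (1 : ℤ) by rw [zpow_one]; ring]
    refine poch_shift_ne_zero hq _ _ fun k hk1 hk2 => ne_one_of_ne k (g4 k (by omega) (by omega))
  have hC : poch q (q * c1) x ≠ 0 := by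
    rw [show q * c1 = c1 * q ^ (1 : ℤ) by rw [zpow_one]; ring]
    refine poch_shift_ne_zero hq _ _ fun k hk1 hk2 => ne_one_of_ne k (g1 k (by omega) (by omega))
  have hA : poch q (c0 * c4 * q ^ ((j : ℤ) + 1)) (N - x + 1) ≠ 0 :=
    poch_shift_ne_zero hq _ _ fun k hk1 hk2 => ne_one_of_ne k (g04 k (by omega) (by omega))
  have hD : poch q (q ^ ((x : ℤ) + 1) * c1 * c2) (N + 1) ≠ 0 := by
    rw [show q ^ ((x : ℤ) + 1) * c1 * c2 = c1 * c2 * q ^ ((x : ℤ) + 1) by ring]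
    exact poch_shift_ne_zero hq _ _ fun k hk1 hk2 => ne_one_of_ne k (g12 k (by omega) (by omega))
  have hE : poch q (c2 * c1 * q ^ ((x : ℤ) + 1)) (N - j + 1) ≠ 0 := by
    rw [show c2 * c1 * q ^ ((x : ℤ) + 1) = c1 * c2 * q ^ ((x : ℤ) + 1) by ring]
    exact poch_shift_ne_zero hq _ _ fun k hk1 hk2 => ne_one_of_ne k (g12 k (by omega) (by omega))
  have hF : poch q (q ^ ((j : ℤ) + 1) * c4 * c0) (N + 1) ≠ 0 := by
    rw [show q ^ ((j : ℤ) + 1) * c4 * c0 = c0 * c4 * q ^ ((j : ℤ) + 1) by ring]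
    exact poch_shift_ne_zero hq _ _ fun k hk1 hk2 => ne_one_of_ne k (g04 k (by omega) (by omega))
  -- rewrite to normal forms
  rw [show ((N : ℤ) - (x : ℤ)) = ((N - x : ℕ) : ℤ) by omega,
      show ((N : ℤ) - (j : ℤ)) = ((N - j : ℕ) : ℤ) by omega,
      Om_eq q s c3 c0 c4 t0 (N - x) j (by omega),
      Om_eq q s c3 c2 c1 t2 (N - j) x (by omega),
      Lam_eq q s c1 c2 c3 c4 t1 t2 t3 t4 N x (by omega),
      Lam_eq q s c4 c0 c3 c1 t4 t0 t3 t1 N j (by omega),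
      show ((N - x : ℕ) : ℤ) = (N : ℤ) - (x : ℤ) by omega,
      show ((N - j : ℕ) : ℤ) = (N : ℤ) - (j : ℤ) by omega,
      show N - j - x = N - x - j by omega]
  rw [div_mul_div_comm, div_mul_div_comm]
  rw [div_eq_div_iff
      (mul_ne_zero
        (mul_ne_zero (mul_ne_zero (hP j (by omega)) (hP (N - x - j) (by omega)))
          (mul_ne_zero (mul_ne_zero (zpow_ne_zero _ (mul_ne_zero hs0 ht00)) hA) hB))
        (mul_ne_zero (mul_ne_zero (hP x (by omega)) (hP (N - x) (by omega)))
          (mul_ne_zero hC hD)))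
      (mul_ne_zero
        (mul_ne_zero (mul_ne_zero (hP x (by omega)) (hP (N - x - j) (by omega)))
          (mul_ne_zero (mul_ne_zero (zpow_ne_zero _ (mul_ne_zero hs0 h20)) hE) hC))
        (mul_ne_zero (mul_ne_zero (hP j (by omega)) (hP (N - j) (by omega)))
          (mul_ne_zero hB hF)))]
  -- split the two long Pochhammer symbols
  have split1 : poch q (q ^ ((x : ℤ) + 1) * c1 * c2) (N + 1)
      = poch q (c2 * c1 * q ^ ((x : ℤ) + 1)) (N - j + 1)
          * poch q (c1 * c2 * q ^ ((N : ℤ) + (x : ℤ) + 2 - (j : ℤ))) j := by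
    rw [show q ^ ((x : ℤ) + 1) * c1 * c2 = c2 * c1 * q ^ ((x : ℤ) + 1) by ring,
        show N + 1 = (N - j + 1) + j by omega, poch_add]
    congr 2
    rw [mul_assoc, ← zpow_natCast q (N - j + 1), ← zpow_add₀ hq,
        show ((x : ℤ) + 1 + ((N - j + 1 : ℕ) : ℤ)) = (N : ℤ) + (x : ℤ) + 2 - (j : ℤ) by omega]
    ring
  have split2 : poch q (q ^ ((j : ℤ) + 1) * c4 * c0) (N + 1)
      = poch q (c0 * c4 * q ^ ((j : ℤ) + 1)) (N - x + 1)
          * poch q (c0 * c4 * q ^ ((N : ℤ) + (j : ℤ) + 2 - (x : ℤ))) x := by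
    rw [show q ^ ((j : ℤ) + 1) * c4 * c0 = c0 * c4 * q ^ ((j : ℤ) + 1) by ring,
        show N + 1 = (N - x + 1) + x by omega, poch_add]
    congr 2
    rw [mul_assoc, ← zpow_natCast q (N - x + 1), ← zpow_add₀ hq,
        show ((j : ℤ) + 1 + ((N - x + 1 : ℕ) : ℤ)) = (N : ℤ) + (j : ℤ) + 2 - (x : ℤ) by omega]
  -- the two reflections
  have refl1 : poch q (c3 * c0 * c4 * q ^ ((N : ℤ) - (x : ℤ) + 2)) j
      = (-1 : ℂ) ^ (j : ℤ) * (c1 * c2) ^ (-(j : ℤ)) * (q ^ (-(N : ℤ) - (x : ℤ) - 1)) ^ (j : ℤ)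
          * q ^ ((j : ℤ) * ((j : ℤ) - 1) / 2)
          * poch q (c1 * c2 * q ^ ((N : ℤ) + (x : ℤ) + 2 - (j : ℤ))) j := by
    rw [show c3 * c0 * c4 * q ^ ((N : ℤ) - (x : ℤ) + 2)
          = q ^ (-(N : ℤ) - (x : ℤ) - 1) * (c1 * c2)⁻¹ by
        rw [hc0,
          show (q ^ (2 * (N : ℤ) + 3) * c1 * c2 * c3 * c4)⁻¹
              = (q ^ (2 * (N : ℤ) + 3))⁻¹ * c1⁻¹ * c2⁻¹ * c3⁻¹ * c4⁻¹ by
            rw [mul_inv, mul_inv, mul_inv, mul_inv],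
          show (c1 * c2)⁻¹ = c1⁻¹ * c2⁻¹ from mul_inv c1 c2,
          show q ^ (-(N : ℤ) - (x : ℤ) - 1)
              = q ^ ((N : ℤ) - (x : ℤ) + 2) * (q ^ (2 * (N : ℤ) + 3))⁻¹ by
            rw [← zpow_neg, ← zpow_add₀ hq]; congr 1; ring]
        linear_combination (c4 * c4⁻¹ * (q ^ (2 * (N : ℤ) + 3))⁻¹ * c1⁻¹ * c2⁻¹
              * q ^ ((N : ℤ) - (x : ℤ) + 2)) * mul_inv_cancel₀ hc3
          + ((q ^ (2 * (N : ℤ) + 3))⁻¹ * c1⁻¹ * c2⁻¹ * q ^ ((N : ℤ) - (x : ℤ) + 2))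
              * mul_inv_cancel₀ hc4]
    rw [poch_reflect hq (mul_ne_zero hc1 hc2) (-(N : ℤ) - (x : ℤ) - 1) j,
        show (1 : ℤ) - (-(N : ℤ) - (x : ℤ) - 1) - (j : ℤ) = (N : ℤ) + (x : ℤ) + 2 - (j : ℤ)
          by ring]
  have refl2 : poch q (c0 * c4 * q ^ ((N : ℤ) + (j : ℤ) + 2 - (x : ℤ))) x
      = (-1 : ℂ) ^ (x : ℤ) * (c1 * c2 * c3) ^ (-(x : ℤ))
          * (q ^ ((j : ℤ) - (x : ℤ) - (N : ℤ) - 1)) ^ (x : ℤ)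
          * q ^ ((x : ℤ) * ((x : ℤ) - 1) / 2)
          * poch q (c1 * c2 * c3 * q ^ ((N : ℤ) - (j : ℤ) + 2)) x := by
    rw [show c0 * c4 * q ^ ((N : ℤ) + (j : ℤ) + 2 - (x : ℤ))
          = q ^ ((j : ℤ) - (x : ℤ) - (N : ℤ) - 1) * (c1 * c2 * c3)⁻¹ by
        rw [hc0,
          show (q ^ (2 * (N : ℤ) + 3) * c1 * c2 * c3 * c4)⁻¹
              = (q ^ (2 * (N : ℤ) + 3))⁻¹ * c1⁻¹ * c2⁻¹ * c3⁻¹ * c4⁻¹ by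
            rw [mul_inv, mul_inv, mul_inv, mul_inv],
          show (c1 * c2 * c3)⁻¹ = c1⁻¹ * c2⁻¹ * c3⁻¹ by rw [mul_inv, mul_inv],
          show q ^ ((j : ℤ) - (x : ℤ) - (N : ℤ) - 1)
              = q ^ ((N : ℤ) + (j : ℤ) + 2 - (x : ℤ)) * (q ^ (2 * (N : ℤ) + 3))⁻¹ by
            rw [← zpow_neg, ← zpow_add₀ hq]; congr 1; ring]
        linear_combination ((q ^ (2 * (N : ℤ) + 3))⁻¹ * c1⁻¹ * c2⁻¹ * c3⁻¹
            * q ^ ((N : ℤ) + (j : ℤ) + 2 - (x : ℤ))) * mul_inv_cancel₀ hc4]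
    rw [poch_reflect hq (mul_ne_zero (mul_ne_zero hc1 hc2) hc3) ((j : ℤ) - (x : ℤ) - (N : ℤ) - 1) x,
        show (1 : ℤ) - ((j : ℤ) - (x : ℤ) - (N : ℤ) - 1) - (x : ℤ) = (N : ℤ) - (j : ℤ) + 2
          by ring]
  have normArg : poch q (c3 * c2 * c1 * q ^ ((N : ℤ) - (j : ℤ) + 2)) x
      = poch q (c1 * c2 * c3 * q ^ ((N : ℤ) - (j : ℤ) + 2)) x := by
    rw [show c3 * c2 * c1 * q ^ ((N : ℤ) - (j : ℤ) + 2)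
          = c1 * c2 * c3 * q ^ ((N : ℤ) - (j : ℤ) + 2) by ring]
  rw [split1, split2, refl1, refl2, normArg]
  linear_combination
    (poch q q (N - x) * poch q q N * poch q q x * poch q q j * poch q q (N - j)
        * poch q q (N - x - j) * poch q (q * c0) j * poch q (q * c2) x * poch q (q * c1) x
        * poch q (q * c4) j * poch q (q * c3) (N - x - j)
        * poch q (c1 * c2 * q ^ ((N : ℤ) + (x : ℤ) + 2 - (j : ℤ))) j
        * poch q (c2 * c1 * q ^ ((x : ℤ) + 1)) (N - j + 1)
        * poch q (c0 * c4 * q ^ ((j : ℤ) + 1)) (N - x + 1)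
        * poch q (c1 * c2 * c3 * q ^ ((N : ℤ) - (j : ℤ) + 2)) x
        * (1 - c0 * c4 * q ^ (2 * (j : ℤ) + 1)) * (1 - c1 * c2 * q ^ (2 * (x : ℤ) + 1)))
      * mono hs0 h10 h20 h30 h40 hs ht1 ht2 ht3 (N : ℤ) (x : ℤ) (j : ℤ) ht0


lemma Om_ne_zero (q s a b c t : ℂ) (hq : q ≠ 0) (hsz : s ≠ 0) (htz : t ≠ 0)
    (M n : ℕ) (hn : n ≤ M)
    (hPa : ∀ m : ℕ, m ≤ M → poch q q m ≠ 0)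
    (hga : ∀ k : ℤ, 1 ≤ k → k ≤ (M : ℤ) + 1 → a ≠ q ^ (-k))
    (hgb : ∀ k : ℤ, 1 ≤ k → k ≤ (M : ℤ) + 1 → b ≠ q ^ (-k))
    (hgc : ∀ k : ℤ, 1 ≤ k → k ≤ (M : ℤ) + 1 → c ≠ q ^ (-k))
    (hgbc : ∀ k : ℤ, 1 ≤ k → k ≤ 2 * (M : ℤ) + 1 → b * c ≠ q ^ (-k))
    (hgabc : ∀ k : ℤ, 1 ≤ k → k ≤ 2 * (M : ℤ) + 1 → a * b * c ≠ q ^ (-k)) :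
    Om q s a b c t (M : ℤ) (n : ℤ) ≠ 0 := by
  have h_qb : poch q (q * b) n ≠ 0 := by
    rw [show q * b = b * q ^ (1 : ℤ) by rw [zpow_one]; ring]
    exact poch_shift_ne_zero hq _ _ fun k hk1 hk2 => ne_one_of_ne k (hgb k (by omega) (by omega))
  have h_qa : poch q (q * a) (M - n) ≠ 0 := by
    rw [show q * a = a * q ^ (1 : ℤ) by rw [zpow_one]; ring]
    exact poch_shift_ne_zero hq _ _ fun k hk1 hk2 => ne_one_of_ne k (hga k (by omega) (by omega))
  have h_qc : poch q (q * c) n ≠ 0 := by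
    rw [show q * c = c * q ^ (1 : ℤ) by rw [zpow_one]; ring]
    exact poch_shift_ne_zero hq _ _ fun k hk1 hk2 => ne_one_of_ne k (hgc k (by omega) (by omega))
  have h_abc : poch q (a * b * c * q ^ ((M : ℤ) + 2)) n ≠ 0 :=
    poch_shift_ne_zero hq _ _ fun k hk1 hk2 => ne_one_of_ne k (hgabc k (by omega) (by omega))
  have h_bc : poch q (b * c * q ^ ((n : ℤ) + 1)) (M + 1) ≠ 0 :=
    poch_shift_ne_zero hq _ _ fun k hk1 hk2 => ne_one_of_ne k (hgbc k (by omega) (by omega))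
  rw [Om_eq q s a b c t M n hn]
  apply div_ne_zero
  · exact mul_ne_zero (mul_ne_zero (mul_ne_zero (mul_ne_zero (hPa M le_rfl)
      (one_sub_ne _ (hgbc _ (by omega) (by omega)))) h_qb) h_abc) h_qa
  · exact mul_ne_zero (mul_ne_zero (hPa n (by omega)) (hPa (M - n) (by omega)))
      (mul_ne_zero (mul_ne_zero (zpow_ne_zero _ (mul_ne_zero hsz htz)) h_bc) h_qc)

lemma Lam_ne_zero (q s a b c d ta tb tc td : ℂ) (hq : q ≠ 0) (hsz : s ≠ 0)
    (hta : ta ≠ 0) (htb : tb ≠ 0) (htc : tc ≠ 0) (htd : td ≠ 0)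
    (N x : ℕ) (hx : x ≤ N)
    (hPa : ∀ m : ℕ, m ≤ N → poch q q m ≠ 0)
    (hga : ∀ k : ℤ, 1 ≤ k → k ≤ (N : ℤ) + 1 → a ≠ q ^ (-k))
    (hgb : ∀ k : ℤ, 1 ≤ k → k ≤ (N : ℤ) + 1 → b ≠ q ^ (-k))
    (hgab : ∀ k : ℤ, 1 ≤ k → k ≤ 2 * (N : ℤ) + 1 → a * b ≠ q ^ (-k)) :
    Lam q s a b c d ta tb tc td (N : ℤ) (x : ℤ) ≠ 0 := by
  have h_qb : poch q (q * b) x ≠ 0 := by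
    rw [show q * b = b * q ^ (1 : ℤ) by rw [zpow_one]; ring]
    exact poch_shift_ne_zero hq _ _ fun k hk1 hk2 => ne_one_of_ne k (hgb k (by omega) (by omega))
  have h_qa : poch q (q * a) x ≠ 0 := by
    rw [show q * a = a * q ^ (1 : ℤ) by rw [zpow_one]; ring]
    exact poch_shift_ne_zero hq _ _ fun k hk1 hk2 => ne_one_of_ne k (hga k (by omega) (by omega))
  have h_ab : poch q (q ^ ((x : ℤ) + 1) * a * b) (N + 1) ≠ 0 := by
    rw [show q ^ ((x : ℤ) + 1) * a * b = a * b * q ^ ((x : ℤ) + 1) by ring]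
    exact poch_shift_ne_zero hq _ _ fun k hk1 hk2 => ne_one_of_ne k (hgab k (by omega) (by omega))
  rw [Lam_eq q s a b c d ta tb tc td N x hx]
  apply div_ne_zero
  · exact mul_ne_zero (mul_ne_zero (mul_ne_zero (mul_ne_zero (mul_ne_zero (mul_ne_zero
      (zpow_ne_zero _ (by norm_num : (-1 : ℂ) ≠ 0)) (hPa N le_rfl))
      (one_sub_ne _ (hgab _ (by omega) (by omega)))) h_qb)
      (zpow_ne_zero _ (mul_ne_zero hsz htb)))
      (zpow_ne_zero _ (div_ne_zero (mul_ne_zero hta htc) (mul_ne_zero htb htd))))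
      (zpow_ne_zero _ hq)
  · exact mul_ne_zero (mul_ne_zero (hPa x (by omega)) (hPa (N - x) (by omega)))
      (mul_ne_zero h_qa h_ab)

lemma key_shuffle (A S1 B S2 C L D L' : ℂ) (h : B * L = D * L') :
    A * S1 * (B * S2) * (C * L) = C * S2 * (D * S1) * (A * L') := by
  linear_combination (A * C * S1 * S2) * h

end qR
/-- Duality of the Tratnik polynomials of q-Racah type. -/
theorem tratnik_duality
    (N : ℕ) (q s c1 c2 c3 c4 c0 t1 t2 t3 t4 t0 : ℂ)
    (hq : q ≠ 0) (hc1 : c1 ≠ 0) (hc2 : c2 ≠ 0) (hc3 : c3 ≠ 0) (hc4 : c4 ≠ 0)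
    (hs : s ^ 2 = q) (ht1 : t1 ^ 2 = c1) (ht2 : t2 ^ 2 = c2) (ht3 : t3 ^ 2 = c3)
    (ht4 : t4 ^ 2 = c4)
    (hc0 : c0 = (q ^ (2 * (N : ℤ) + 3) * c1 * c2 * c3 * c4)⁻¹)
    (ht0 : t0 = (s ^ (2 * (N : ℤ) + 3) * t1 * t2 * t3 * t4)⁻¹)
    (hgen : ∀ e0 e1 e2 e3 e4 : ℕ, e0 ≤ 1 → e1 ≤ 1 → e2 ≤ 1 → e3 ≤ 1 → e4 ≤ 1 →
      1 ≤ e0 + e1 + e2 + e3 + e4 → e0 + e1 + e2 + e3 + e4 ≤ 4 →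
      ∀ k : ℤ, 1 ≤ k → k ≤ 2 * (N : ℤ) + 5 →
        c0 ^ e0 * c1 ^ e1 * c2 ^ e2 * c3 ^ e3 * c4 ^ e4 ≠ q ^ (-k))
    (hq1 : ∀ k : ℕ, 1 ≤ k → k ≤ N → q ^ k ≠ 1)
    (i j x y : ℕ) (hij : i + j ≤ N) (hxy : x + y ≤ N) :
    qR.T q s c1 c2 c3 c4 t1 t2 t3 t4 (N : ℤ) (i : ℤ) (j : ℤ) (x : ℤ) (y : ℤ)
        / (qR.Om q s c1 c2 c3 t2 ((N : ℤ) - (j : ℤ)) (i : ℤ)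
            * qR.Lam q s c4 c0 c3 c1 t4 t0 t3 t1 (N : ℤ) (j : ℤ))
      = qR.T q s c4 c0 c3 c1 t4 t0 t3 t1 (N : ℤ) (y : ℤ) (x : ℤ) (j : ℤ) (i : ℤ)
          / (qR.Om q s c4 c0 c3 t0 ((N : ℤ) - (x : ℤ)) (y : ℤ)
              * qR.Lam q s c1 c2 c3 c4 t1 t2 t3 t4 (N : ℤ) (x : ℤ)) := by
  have hs0 : s ≠ 0 := fun h => hq (by rw [← hs, h]; ring)
  have h10 : t1 ≠ 0 := fun h => hc1 (by rw [← ht1, h]; ring)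
  have h20 : t2 ≠ 0 := fun h => hc2 (by rw [← ht2, h]; ring)
  have h30 : t3 ≠ 0 := fun h => hc3 (by rw [← ht3, h]; ring)
  have h40 : t4 ≠ 0 := fun h => hc4 (by rw [← ht4, h]; ring)
  have hc00 : c0 ≠ 0 := by
    rw [hc0]
    exact inv_ne_zero (mul_ne_zero (mul_ne_zero (mul_ne_zero (mul_ne_zero
      (zpow_ne_zero _ hq) hc1) hc2) hc3) hc4)
  have ht00 : t0 ≠ 0 := by
    rw [ht0]
    exact inv_ne_zero (mul_ne_zero (mul_ne_zero (mul_ne_zero (mul_ne_zero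
      (zpow_ne_zero _ hs0) h10) h20) h30) h40)
  -- hgen instances
  have g0 : ∀ k : ℤ, 1 ≤ k → k ≤ 2 * (N : ℤ) + 5 → c0 ≠ q ^ (-k) := fun k h1 h2 => by
    have := hgen 1 0 0 0 0 (by norm_num) (by norm_num) (by norm_num) (by norm_num) (by norm_num)
      (by norm_num) (by norm_num) k h1 h2
    simpa using this
  have g1 : ∀ k : ℤ, 1 ≤ k → k ≤ 2 * (N : ℤ) + 5 → c1 ≠ q ^ (-k) := fun k h1 h2 => by
    have := hgen 0 1 0 0 0 (by norm_num) (by norm_num) (by norm_num) (by norm_num) (by norm_num)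
      (by norm_num) (by norm_num) k h1 h2
    simpa using this
  have g2 : ∀ k : ℤ, 1 ≤ k → k ≤ 2 * (N : ℤ) + 5 → c2 ≠ q ^ (-k) := fun k h1 h2 => by
    have := hgen 0 0 1 0 0 (by norm_num) (by norm_num) (by norm_num) (by norm_num) (by norm_num)
      (by norm_num) (by norm_num) k h1 h2
    simpa using this
  have g3 : ∀ k : ℤ, 1 ≤ k → k ≤ 2 * (N : ℤ) + 5 → c3 ≠ q ^ (-k) := fun k h1 h2 => by
    have := hgen 0 0 0 1 0 (by norm_num) (by norm_num) (by norm_num) (by norm_num) (by norm_num)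
      (by norm_num) (by norm_num) k h1 h2
    simpa using this
  have g4 : ∀ k : ℤ, 1 ≤ k → k ≤ 2 * (N : ℤ) + 5 → c4 ≠ q ^ (-k) := fun k h1 h2 => by
    have := hgen 0 0 0 0 1 (by norm_num) (by norm_num) (by norm_num) (by norm_num) (by norm_num)
      (by norm_num) (by norm_num) k h1 h2
    simpa using this
  have g23 : ∀ k : ℤ, 1 ≤ k → k ≤ 2 * (N : ℤ) + 5 → c2 * c3 ≠ q ^ (-k) := fun k h1 h2 => by
    have := hgen 0 0 1 1 0 (by norm_num) (by norm_num) (by norm_num) (by norm_num) (by norm_num)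
      (by norm_num) (by norm_num) k h1 h2
    simpa using this
  have g03 : ∀ k : ℤ, 1 ≤ k → k ≤ 2 * (N : ℤ) + 5 → c0 * c3 ≠ q ^ (-k) := fun k h1 h2 => by
    have := hgen 1 0 0 1 0 (by norm_num) (by norm_num) (by norm_num) (by norm_num) (by norm_num)
      (by norm_num) (by norm_num) k h1 h2
    simpa using this
  have g04 : ∀ k : ℤ, 1 ≤ k → k ≤ 2 * (N : ℤ) + 5 → c4 * c0 ≠ q ^ (-k) := fun k h1 h2 => by
    have := hgen 1 0 0 0 1 (by norm_num) (by norm_num) (by norm_num) (by norm_num) (by norm_num)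
      (by norm_num) (by norm_num) k h1 h2
    simpa [mul_comm] using this
  have g123 : ∀ k : ℤ, 1 ≤ k → k ≤ 2 * (N : ℤ) + 5 → c1 * c2 * c3 ≠ q ^ (-k) :=
    fun k h1 h2 => by
    have := hgen 0 1 1 1 0 (by norm_num) (by norm_num) (by norm_num) (by norm_num) (by norm_num)
      (by norm_num) (by norm_num) k h1 h2
    simpa [mul_assoc] using this
  have g12 : ∀ k : ℤ, 1 ≤ k → k ≤ 2 * (N : ℤ) + 5 → c1 * c2 ≠ q ^ (-k) := fun k h1 h2 => by
    have := hgen 0 1 1 0 0 (by norm_num) (by norm_num) (by norm_num) (by norm_num) (by norm_num)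
      (by norm_num) (by norm_num) k h1 h2
    simpa using this
  have g034 : ∀ k : ℤ, 1 ≤ k → k ≤ 2 * (N : ℤ) + 5 → c4 * c0 * c3 ≠ q ^ (-k) :=
    fun k h1 h2 => by
    have := hgen 1 0 0 1 1 (by norm_num) (by norm_num) (by norm_num) (by norm_num) (by norm_num)
      (by norm_num) (by norm_num) k h1 h2
    rw [show c4 * c0 * c3 = c0 * c3 * c4 by ring]
    simpa [mul_assoc] using this
  have hP : ∀ m : ℕ, m ≤ N → qR.poch q q m ≠ 0 := by
    intro m hm
    apply qR.poch_ne_zero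
    intro l hl hE
    exact hq1 (l + 1) (by omega) (by omega) (by rw [pow_succ, mul_comm]; exact hE)
  -- nonvanishing of the four normalisations
  have hOm1 : qR.Om q s c1 c2 c3 t2 ((N : ℤ) - (j : ℤ)) (i : ℤ) ≠ 0 := by
    rw [show ((N : ℤ) - (j : ℤ)) = ((N - j : ℕ) : ℤ) by omega]
    exact qR.Om_ne_zero q s c1 c2 c3 t2 hq hs0 h20 (N - j) i (by omega)
      (fun m hm => hP m (by omega))
      (fun k hk1 hk2 => g1 k (by omega) (by omega))
      (fun k hk1 hk2 => g2 k (by omega) (by omega))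
      (fun k hk1 hk2 => g3 k (by omega) (by omega))
      (fun k hk1 hk2 => g23 k (by omega) (by omega))
      (fun k hk1 hk2 => g123 k (by omega) (by omega))
  have hOm2 : qR.Om q s c4 c0 c3 t0 ((N : ℤ) - (x : ℤ)) (y : ℤ) ≠ 0 := by
    rw [show ((N : ℤ) - (x : ℤ)) = ((N - x : ℕ) : ℤ) by omega]
    exact qR.Om_ne_zero q s c4 c0 c3 t0 hq hs0 ht00 (N - x) y (by omega)
      (fun m hm => hP m (by omega))
      (fun k hk1 hk2 => g4 k (by omega) (by omega))
      (fun k hk1 hk2 => g0 k (by omega) (by omega))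
      (fun k hk1 hk2 => g3 k (by omega) (by omega))
      (fun k hk1 hk2 => g03 k (by omega) (by omega))
      (fun k hk1 hk2 => g034 k (by omega) (by omega))
  have hLam1 : qR.Lam q s c4 c0 c3 c1 t4 t0 t3 t1 (N : ℤ) (j : ℤ) ≠ 0 :=
    qR.Lam_ne_zero q s c4 c0 c3 c1 t4 t0 t3 t1 hq hs0 h40 ht00 h30 h10 N j (by omega) hP
      (fun k hk1 hk2 => g4 k (by omega) (by omega))
      (fun k hk1 hk2 => g0 k (by omega) (by omega))
      (fun k hk1 hk2 => g04 k (by omega) (by omega))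
  have hLam2 : qR.Lam q s c1 c2 c3 c4 t1 t2 t3 t4 (N : ℤ) (x : ℤ) ≠ 0 :=
    qR.Lam_ne_zero q s c1 c2 c3 c4 t1 t2 t3 t4 hq hs0 h10 h20 h30 h40 N x (by omega) hP
      (fun k hk1 hk2 => g1 k (by omega) (by omega))
      (fun k hk1 hk2 => g2 k (by omega) (by omega))
      (fun k hk1 hk2 => g12 k (by omega) (by omega))
  rw [div_eq_div_iff (mul_ne_zero hOm1 hLam1) (mul_ne_zero hOm2 hLam2)]
  by_cases hxj : x + j ≤ N
  · -- generic case
    have hC2 : (q ^ (2 * (N : ℤ) + 3) * c4 * c0 * c3 * c1)⁻¹ = c2 := by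
      rw [hc0]
      field_simp
    have hT2 : (s ^ (2 * (N : ℤ) + 3) * t4 * t0 * t3 * t1)⁻¹ = t2 := by
      rw [ht0]
      field_simp
    have hsc := qR.scalar N q s c1 c2 c3 c4 c0 t1 t2 t3 t4 t0 hq hc1 hc2 hc3 hc4 hs ht1 ht2 ht3
      ht4 hc0 ht0 hgen hq1 x j hxj
    have hS1 := qR.sum_sym q c1 c2 c3 hq ((N : ℤ) - (j : ℤ)) i x (by omega) (by omega)
    have hS2 := qR.sum_sym q c3 c0 c4 hq ((N : ℤ) - (x : ℤ)) j y (by omega) (by omega)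
    simp only [qR.T, qR.p]
    rw [if_pos (⟨by omega, by omega, by omega⟩ :
          (0 : ℤ) ≤ (i : ℤ) ∧ (0 : ℤ) ≤ (j : ℤ) ∧ (i : ℤ) + (j : ℤ) ≤ (N : ℤ)),
        if_pos (⟨by omega, by omega, by omega⟩ :
          (0 : ℤ) ≤ (y : ℤ) ∧ (0 : ℤ) ≤ (x : ℤ) ∧ (y : ℤ) + (x : ℤ) ≤ (N : ℤ)),
        if_pos (⟨by omega, by omega, by omega, by omega⟩ :
          (0 : ℤ) ≤ (i : ℤ) ∧ (i : ℤ) ≤ (N : ℤ) - (j : ℤ) ∧ (0 : ℤ) ≤ (x : ℤ)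
            ∧ (x : ℤ) ≤ (N : ℤ) - (j : ℤ)),
        if_pos (⟨by omega, by omega, by omega, by omega⟩ :
          (0 : ℤ) ≤ (j : ℤ) ∧ (j : ℤ) ≤ (N : ℤ) - (x : ℤ) ∧ (0 : ℤ) ≤ (y : ℤ)
            ∧ (y : ℤ) ≤ (N : ℤ) - (x : ℤ)),
        if_pos (⟨by omega, by omega, by omega, by omega⟩ :
          (0 : ℤ) ≤ (y : ℤ) ∧ (y : ℤ) ≤ (N : ℤ) - (x : ℤ) ∧ (0 : ℤ) ≤ (j : ℤ)
            ∧ (j : ℤ) ≤ (N : ℤ) - (x : ℤ)),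
        if_pos (⟨by omega, by omega, by omega, by omega⟩ :
          (0 : ℤ) ≤ (x : ℤ) ∧ (x : ℤ) ≤ (N : ℤ) - (j : ℤ) ∧ (0 : ℤ) ≤ (i : ℤ)
            ∧ (i : ℤ) ≤ (N : ℤ) - (j : ℤ))]
    rw [← hc0, ← ht0, hC2, hT2]
    simp only [Int.toNat_natCast]
    rw [hS1, hS2]
    exact qR.key_shuffle _ _ _ _ _ _ _ _ hsc
  · -- degenerate case: both Tratnik polynomials vanish
    have hT1 : qR.T q s c1 c2 c3 c4 t1 t2 t3 t4 (N : ℤ) (i : ℤ) (j : ℤ) (x : ℤ) (y : ℤ) = 0 := by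
      simp only [qR.T, qR.p]
      rw [if_pos (⟨by omega, by omega, by omega⟩ :
            (0 : ℤ) ≤ (i : ℤ) ∧ (0 : ℤ) ≤ (j : ℤ) ∧ (i : ℤ) + (j : ℤ) ≤ (N : ℤ)),
          if_neg (show ¬((0 : ℤ) ≤ (i : ℤ) ∧ (i : ℤ) ≤ (N : ℤ) - (j : ℤ) ∧ (0 : ℤ) ≤ (x : ℤ)
              ∧ (x : ℤ) ≤ (N : ℤ) - (j : ℤ)) from fun h => by
            obtain ⟨_, _, _, h4⟩ := h; omega),
          zero_mul]
    have hT2 : qR.T q s c4 c0 c3 c1 t4 t0 t3 t1 (N : ℤ) (y : ℤ) (x : ℤ) (j : ℤ) (i : ℤ) = 0 := by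
      simp only [qR.T, qR.p]
      rw [if_pos (⟨by omega, by omega, by omega⟩ :
            (0 : ℤ) ≤ (y : ℤ) ∧ (0 : ℤ) ≤ (x : ℤ) ∧ (y : ℤ) + (x : ℤ) ≤ (N : ℤ)),
          if_neg (show ¬((0 : ℤ) ≤ (y : ℤ) ∧ (y : ℤ) ≤ (N : ℤ) - (x : ℤ) ∧ (0 : ℤ) ≤ (j : ℤ)
              ∧ (j : ℤ) ≤ (N : ℤ) - (x : ℤ)) from fun h => by
            obtain ⟨_, _, _, h4⟩ := h; omega),
          zero_mul]
    rw [hT1, hT2, zero_mul, zero_mul]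
end
end
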